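/- Let λ be a partition of n = p + q and X ∈ {BDI, CI, CII, DIII}, and assume syd_X(λ;p,q) ≠ ∅. If X = BDI or X = CII, then syd_X(λ;p,q) has exactly one element if and only if the number of odd parts of λ equals |p − q|, or all odd parts of λ have the same length. If X = CI or X = DIII, then syd_X(λ;p,q) has exactly one element if and only if all parts of λ are odd. -/

import Mathlib

open Finset

/-- A partition of `n`, given by the function `l` listing its parts in weakly
decreasing order: `l j = λ_j` is the `j`-th part for `1 ≤ j ≤ len`, and
`l j = 0` for `j > len`. -/
structure PartitionData : Type where
  l : ℕ → ℕ
  len : ℕ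
  anti : ∀ j, 1 ≤ j → l (j + 1) ≤ l j
  pos : ∀ j, 1 ≤ j → (0 < l j ↔ j ≤ len)

namespace PartitionData

/-- The multiplicity `m(i)` of `i` as a part of the partition. -/
def mult (P : PartitionData) (i : ℕ) : ℕ :=
  ((Finset.Icc 1 P.len).filter (fun j => P.l j = i)).card

/-- The finite set of (distinct) parts of the partition. -/
def partsSet (P : PartitionData) : Finset ℕ :=
  (Finset.Icc 1 P.len).image P.l

/-- The sum of the parts (i.e. the number `n` the partition partitions). -/
def boxSum (P : PartitionData) : ℕ := ∑ j ∈ Finset.Icc 1 P.len, P.l j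

/-- The number of odd parts of the partition. -/
def oddCount (P : PartitionData) : ℕ :=
  ((Finset.Icc 1 P.len).filter (fun j => Odd (P.l j))).card

end PartitionData

/-- A signed Young diagram of shape `P` and signature `(p, q)`, encoded by the
function `f` sending each part length `i` to `m_T⁺(i)`, the number of rows of
length `i` whose leading sign is `+`.  A row of length `i` with leading sign
`+` has `(i+1)/2` plus-boxes and `i/2` minus-boxes, and vice versa. -/
structure SYD (P : PartitionData) (p q : ℕ) : Type where
  f : ℕ → ℕ
  le_mult : ∀ i, f i ≤ P.mult i
  plus_eq : ∑ i ∈ P.partsSet, (f i * ((i + 1) / 2) + (P.mult i - f i) * (i / 2)) = p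
  minus_eq : ∑ i ∈ P.partsSet, (f i * (i / 2) + (P.mult i - f i) * ((i + 1) / 2)) = q

/-- `i` and `j` are consecutive distinct parts: `i > j` with no part strictly
in between (so if the distinct parts are `i_1 > ⋯ > i_k`, the pairs are
`(i_r, i_{r+1})`). -/
def Consec (P : PartitionData) (i j : ℕ) : Prop :=
  i ∈ P.partsSet ∧ j ∈ P.partsSet ∧ j < i ∧ ∀ x ∈ P.partsSet, ¬ (j < x ∧ x < i)

/-- `j` is the smallest part `i_k`. -/
def IsMinPart (P : PartitionData) (j : ℕ) : Prop :=
  j ∈ P.partsSet ∧ ∀ x ∈ P.partsSet, j ≤ x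

/-- Adjacency of signed Young diagrams with step `c`:
`π(T) - π(T') ∈ {±c(e_r - e_{r+1})} ∪ {±c e_k}` in the coordinates indexed by
the distinct parts `i_1 > ⋯ > i_k`. -/
def AdjRel (P : PartitionData) {p q : ℕ} (c : ℕ) (T T' : SYD P p q) : Prop :=
  (∃ i j, Consec P i j ∧ (∀ x, x ≠ i → x ≠ j → T.f x = T'.f x) ∧
    ((T.f i = T'.f i + c ∧ T'.f j = T.f j + c) ∨
      (T'.f i = T.f i + c ∧ T.f j = T'.f j + c)))
  ∨ (∃ j, IsMinPart P j ∧ (∀ x, x ≠ j → T.f x = T'.f x) ∧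
      (T.f j = T'.f j + c ∨ T'.f j = T.f j + c))

/-- The orbit graph `Γ(λ;p,q)` (type AIII). -/
def orbitGraph (P : PartitionData) (p q : ℕ) : SimpleGraph (SYD P p q) :=
  SimpleGraph.fromRel (AdjRel P 1)

/-- Type BDI: `m_T⁺(i) = m(i)/2` for every even part length `i`. -/
def SYD.IsBDI {P : PartitionData} {p q : ℕ} (T : SYD P p q) : Prop :=
  ∀ i, Even i → 2 * T.f i = P.mult i

/-- Type CI: `p = q` and `m_T⁺(i) = m(i)/2` for every odd part length `i`. -/
def SYD.IsCI {P : PartitionData} {p q : ℕ} (T : SYD P p q) : Prop :=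
  p = q ∧ ∀ i, Odd i → 2 * T.f i = P.mult i

/-- Type CII: `p`, `q` even, `m_T⁺(i) = m(i)/2` for every even part length `i`,
and `m(i)`, `m_T⁺(i)` even for every odd part length `i`. -/
def SYD.IsCII {P : PartitionData} {p q : ℕ} (T : SYD P p q) : Prop :=
  Even p ∧ Even q ∧ (∀ i, Even i → 2 * T.f i = P.mult i) ∧
    ∀ i, Odd i → Even (P.mult i) ∧ Even (T.f i)

/-- Type DIII: `p = q`, `m_T⁺(i) = m(i)/2` for every odd part length `i`, and
`m(i)`, `m_T⁺(i)` even for every even part length `i`. -/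
def SYD.IsDIII {P : PartitionData} {p q : ℕ} (T : SYD P p q) : Prop :=
  p = q ∧ (∀ i, Odd i → 2 * T.f i = P.mult i) ∧
    ∀ i, Even i → Even (P.mult i) ∧ Even (T.f i)

/-- The orbit graph `Γ_X(λ;p,q)` on the vertices `syd_X(λ;p,q)` (given by the
predicate `Pr`), with step `c` (`c = 1` for X = BDI, CI and `c = 2` for
X = CII, DIII). -/
def orbitGraphX (P : PartitionData) (p q c : ℕ) (Pr : SYD P p q → Prop) :
    SimpleGraph {T : SYD P p q // Pr T} :=
  SimpleGraph.fromRel (fun T T' => AdjRel P c T.1 T'.1)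

/-! Odd rows carry one more box of their leading sign than of the other, even rows carry
equally many of each. Hence `p` and `q` only see `S = ∑_{i odd} m⁺(i)`, while `m⁺` is free at
even lengths. For BDI and CII the even coordinates are pinned, and the odd ones range over the
points (step 1, resp. 2) of a box with prescribed coordinate sum `S`: a single point iff the box
is at most one-dimensional or `S` is extremal, i.e. `S = 0` or `S = oddCount`, which is
`oddCount = |p - q|` since `p - q = S - (oddCount - S)`. For CI and DIII the odd coordinates are
pinned and each even length `i` may take any value in `[0, m(i)]` (step 1, resp. 2), so the
diagram is unique iff there are no even parts. -/

theorem rows_plus_boxes (g m i : ℕ) (h : g ≤ m) :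
    g * ((i + 1) / 2) + (m - g) * (i / 2) = m * (i / 2) + if Odd i then g else 0 := by
  obtain ⟨r, rfl⟩ := Nat.exists_eq_add_of_le h
  obtain ⟨k, rfl | rfl⟩ := Nat.even_or_odd' i
  · have h₁ : (2 * k + 1) / 2 = k := by omega
    have h₂ : 2 * k / 2 = k := by omega
    have h₃ : ¬Odd (2 * k) := by simp
    simp only [h₁, h₂, h₃, if_false, Nat.add_sub_cancel_left]
    ring
  · have h₁ : (2 * k + 1 + 1) / 2 = k + 1 := by omega
    have h₂ : (2 * k + 1) / 2 = k := by omega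
    have h₃ : Odd (2 * k + 1) := odd_two_mul_add_one k
    simp only [h₁, h₂, h₃, if_true, Nat.add_sub_cancel_left]
    ring

theorem rows_minus_boxes (g m i : ℕ) (h : g ≤ m) :
    g * (i / 2) + (m - g) * ((i + 1) / 2) = m * (i / 2) + if Odd i then m - g else 0 := by
  rw [add_comm, ← rows_plus_boxes (m - g) m i (Nat.sub_le m g), Nat.sub_sub_self h]

theorem Nat.card_subtype_eq_one_iff {α : Type*} {Pr : α → Prop} {x : α} (hx : Pr x) :
    Nat.card {y // Pr y} = 1 ↔ ∀ y, Pr y → y = x := by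
  rw [Nat.card_eq_one_iff_unique]
  constructor
  · rintro ⟨h, -⟩ y hy
    exact congrArg Subtype.val (Subsingleton.elim (⟨y, hy⟩ : {y // Pr y}) ⟨x, hx⟩)
  · intro h
    exact ⟨⟨fun a b => Subtype.ext ((h _ a.2).trans (h _ b.2).symm)⟩, ⟨⟨x, hx⟩⟩⟩

namespace PartitionData

variable (P : PartitionData)

theorem mult_pos {i : ℕ} (h : i ∈ P.partsSet) : 0 < P.mult i := by
  obtain ⟨j, hj, rfl⟩ := mem_image.mp h
  exact card_pos.mpr ⟨j, mem_filter.mpr ⟨hj, rfl⟩⟩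

theorem mult_eq_zero {i : ℕ} (h : i ∉ P.partsSet) : P.mult i = 0 := by
  rw [mult, card_eq_zero, filter_eq_empty_iff]
  rintro j hj rfl
  exact h (mem_image_of_mem _ hj)

def oddParts : Finset ℕ := P.partsSet.filter Odd

/-- Every row of length `i` contributes `i / 2` boxes to each sign, whatever its leading sign. -/
def halfBoxes : ℕ := ∑ i ∈ P.partsSet, P.mult i * (i / 2)

theorem oddCount_eq_sum_mult : P.oddCount = ∑ i ∈ P.oddParts, P.mult i := by
  rw [oddCount, card_eq_sum_card_fiberwise (f := P.l) (t := P.oddParts)]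
  · refine sum_congr rfl fun i hi => ?_
    rw [mult, filter_filter]
    refine congrArg card (filter_congr fun j _ => ?_)
    exact and_iff_right_of_imp fun h => h ▸ (mem_filter.mp hi).2
  · intro j hj
    rw [coe_filter] at hj
    exact mem_filter.mpr ⟨mem_image_of_mem _ hj.1, hj.2⟩

theorem forall_odd_l_iff :
    (∀ j, 1 ≤ j → j ≤ P.len → Odd (P.l j)) ↔ ∀ i ∈ P.partsSet, Odd i := by
  simp only [partsSet, forall_mem_image, mem_Icc, and_imp]

theorem forall_odd_l_eq_iff :
    (∀ j j', 1 ≤ j → j ≤ P.len → 1 ≤ j' → j' ≤ P.len →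
      Odd (P.l j) → Odd (P.l j') → P.l j = P.l j') ↔ (P.oddParts : Set ℕ).Subsingleton := by
  simp only [Set.Subsingleton, oddParts, partsSet, coe_filter, mem_image, mem_Icc,
    Set.mem_ofPred_eq, and_imp, forall_exists_index]
  grind

theorem sum_plus_boxes (g : ℕ → ℕ) (hg : ∀ i, g i ≤ P.mult i) :
    ∑ i ∈ P.partsSet, (g i * ((i + 1) / 2) + (P.mult i - g i) * (i / 2))
      = P.halfBoxes + ∑ i ∈ P.oddParts, g i := by
  rw [halfBoxes, oddParts, sum_filter, ← sum_add_distrib]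
  exact sum_congr rfl fun i _ => rows_plus_boxes _ _ _ (hg i)

theorem sum_minus_boxes (g : ℕ → ℕ) (hg : ∀ i, g i ≤ P.mult i) :
    ∑ i ∈ P.partsSet, (g i * (i / 2) + (P.mult i - g i) * ((i + 1) / 2))
      = P.halfBoxes + ∑ i ∈ P.oddParts, (P.mult i - g i) := by
  rw [halfBoxes, oddParts, sum_filter Odd (fun i => P.mult i - g i), ← sum_add_distrib]
  exact sum_congr rfl fun i _ => rows_minus_boxes _ _ _ (hg i)

theorem sum_add_sum_mult_sub (g : ℕ → ℕ) (hg : ∀ i, g i ≤ P.mult i) :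
    ∑ i ∈ P.oddParts, g i + ∑ i ∈ P.oddParts, (P.mult i - g i) = P.oddCount := by
  rw [oddCount_eq_sum_mult, ← sum_add_distrib]
  exact sum_congr rfl fun i _ => Nat.add_sub_cancel' (hg i)

end PartitionData

namespace SYD

variable {P : PartitionData} {p q : ℕ}

@[ext]
theorem ext {T T' : SYD P p q} (h : T.f = T'.f) : T = T' := by
  cases T
  cases T'
  subst h
  rfl

theorem f_eq_zero_of_not_mem (T : SYD P p q) {i : ℕ} (h : i ∉ P.partsSet) : T.f i = 0 :=
  Nat.le_zero.mp (P.mult_eq_zero h ▸ T.le_mult i)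

theorem halfBoxes_add_sum_f (T : SYD P p q) : P.halfBoxes + ∑ i ∈ P.oddParts, T.f i = p := by
  rw [← P.sum_plus_boxes T.f T.le_mult, T.plus_eq]

theorem halfBoxes_add_sum_mult_sub_f (T : SYD P p q) :
    P.halfBoxes + ∑ i ∈ P.oddParts, (P.mult i - T.f i) = q := by
  rw [← P.sum_minus_boxes T.f T.le_mult, T.minus_eq]

theorem sum_f_eq (T T' : SYD P p q) :
    ∑ i ∈ P.oddParts, T.f i = ∑ i ∈ P.oddParts, T'.f i := by
  have := T.halfBoxes_add_sum_f
  have := T'.halfBoxes_add_sum_f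
  omega

theorem oddCount_eq_abs_sub_iff (T : SYD P p q) :
    (P.oddCount : ℤ) = |(p : ℤ) - q| ↔
      ∑ i ∈ P.oddParts, T.f i = 0 ∨ ∑ i ∈ P.oddParts, T.f i = P.oddCount := by
  have hp := T.halfBoxes_add_sum_f
  have hq := T.halfBoxes_add_sum_mult_sub_f
  have hN := P.sum_add_sum_mult_sub T.f T.le_mult
  rcases abs_cases ((p : ℤ) - q) with ⟨h, hs⟩ | ⟨h, hs⟩ <;> rw [h] <;> constructor <;> intro <;> omega

/-- Only the sum of `f` over the odd parts is seen by the signature. -/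
def ofSumEq (T : SYD P p q) (g : ℕ → ℕ) (hg : ∀ i, g i ≤ P.mult i)
    (hsum : ∑ i ∈ P.oddParts, g i = ∑ i ∈ P.oddParts, T.f i) : SYD P p q where
  f := g
  le_mult := hg
  plus_eq := by rw [P.sum_plus_boxes g hg, hsum, T.halfBoxes_add_sum_f]
  minus_eq := by
    have := P.sum_add_sum_mult_sub g hg
    have := P.sum_add_sum_mult_sub T.f T.le_mult
    have := T.halfBoxes_add_sum_mult_sub_f
    rw [P.sum_minus_boxes g hg]
    omega

theorem exists_transfer (T : SYD P p q) {a b c : ℕ} (ha : a ∈ P.oddParts)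
    (hb : b ∈ P.oddParts) (hab : a ≠ b) (hca : c ≤ T.f a) (hcb : T.f b + c ≤ P.mult b) :
    ∃ T' : SYD P p q, T'.f a + c = T.f a ∧ T'.f b = T.f b + c ∧
      ∀ i, i ≠ a → i ≠ b → T'.f i = T.f i := by
  set g := Function.update (Function.update T.f a (T.f a - c)) b (T.f b + c) with hg
  have hga : g a = T.f a - c := by simp [hg, hab]
  have hgb : g b = T.f b + c := by simp [hg]
  have hgi : ∀ i, i ≠ a → i ≠ b → g i = T.f i := fun i hia hib => by simp [hg, hia, hib]
  have hle : ∀ i, g i ≤ P.mult i := by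
    intro i
    by_cases hia : i = a
    · subst hia; have := T.le_mult i; omega
    by_cases hib : i = b
    · subst hib; omega
    · exact hgi i hia hib ▸ T.le_mult i
  have hsum : ∑ i ∈ P.oddParts, g i = ∑ i ∈ P.oddParts, T.f i := by
    have hshift : ∀ i, g i + (if i = a then c else 0) = T.f i + if i = b then c else 0 := by
      intro i
      by_cases hia : i = a
      · rw [hia, if_pos rfl, if_neg hab, hga]; omega
      by_cases hib : i = b
      · rw [hib, if_neg (Ne.symm hab), if_pos rfl, hgb, add_zero]
      · rw [if_neg hia, if_neg hib, hgi i hia hib]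
    have := sum_congr rfl fun i (_ : i ∈ P.oddParts) => hshift i
    simp only [sum_add_distrib, sum_ite_eq', ha, hb, if_true] at this
    omega
  exact ⟨T.ofSumEq g hle hsum, show g a + c = T.f a by omega, hgb, hgi⟩

theorem exists_update_of_even (T : SYD P p q) {i₀ v : ℕ} (h₀ : Even i₀)
    (hv : v ≤ P.mult i₀) : ∃ T' : SYD P p q, T'.f = Function.update T.f i₀ v := by
  have hle : ∀ i, Function.update T.f i₀ v i ≤ P.mult i := by
    intro i
    by_cases hi : i = i₀
    · subst hi; simpa using hv
    · simpa [hi] using T.le_mult i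
  refine ⟨T.ofSumEq _ hle (sum_congr rfl fun i hi => ?_), rfl⟩
  have hne : i ≠ i₀ := by
    rintro rfl
    exact Nat.not_odd_iff_even.mpr h₀ (mem_filter.mp hi).2
  exact Function.update_of_ne hne _ _

theorem eq_of_eq_on_even {T T' : SYD P p q} (heven : ∀ i, Even i → T.f i = T'.f i)
    (h : (P.oddCount : ℤ) = |(p : ℤ) - q| ∨ (P.oddParts : Set ℕ).Subsingleton) : T = T' := by
  ext i
  rcases Nat.even_or_odd i with hi | hi
  · exact heven i hi
  by_cases hmem : i ∈ P.partsSet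
  swap
  · rw [T.f_eq_zero_of_not_mem hmem, T'.f_eq_zero_of_not_mem hmem]
  have hodd : i ∈ P.oddParts := mem_filter.mpr ⟨hmem, hi⟩
  have hsum := T.sum_f_eq T'
  rcases h with h | h
  · rcases T.oddCount_eq_abs_sub_iff.mp h with h₀ | hN
    · have hzero := fun (T : SYD P p q) (hT : ∑ i ∈ P.oddParts, T.f i = 0) =>
        sum_eq_zero_iff.mp hT i hodd
      rw [hzero T h₀, hzero T' (hsum ▸ h₀)]
    · rw [P.oddCount_eq_sum_mult] at hN
      have hmax := fun (T : SYD P p q) (hT : ∑ i ∈ P.oddParts, T.f i = _) =>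
        (sum_eq_sum_iff_of_le fun i _ => T.le_mult i).mp hT i hodd
      rw [hmax T hN, hmax T' (hsum ▸ hN)]
  · have hsingle : P.oddParts = {i} := eq_singleton_iff_unique_mem.mpr ⟨hodd, fun x hx => h hx hodd⟩
    simpa [hsingle] using hsum

theorem eq_of_eq_on_odd {T T' : SYD P p q} (hodd : ∀ i, Odd i → T.f i = T'.f i)
    (h : ∀ i ∈ P.partsSet, Odd i) : T = T' := by
  ext i
  by_cases hmem : i ∈ P.partsSet
  · exact hodd i (h i hmem)
  · rw [T.f_eq_zero_of_not_mem hmem, T'.f_eq_zero_of_not_mem hmem]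

theorem exists_pos_lt_mult (T : SYD P p q) (hpos : ∑ i ∈ P.oddParts, T.f i ≠ 0)
    (hlt : ∑ i ∈ P.oddParts, T.f i ≠ P.oddCount) (hnt : (P.oddParts : Set ℕ).Nontrivial) :
    ∃ a ∈ P.oddParts, ∃ b ∈ P.oddParts, a ≠ b ∧ 0 < T.f a ∧ T.f b < P.mult b := by
  obtain ⟨a, ha, hfa⟩ := exists_ne_zero_of_sum_ne_zero hpos
  obtain ⟨b, hb, hfb⟩ : ∃ b ∈ P.oddParts, T.f b < P.mult b := by
    refine exists_lt_of_sum_lt (lt_of_le_of_ne (sum_le_sum fun i _ => T.le_mult i) ?_)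
    rwa [← P.oddCount_eq_sum_mult]
  by_cases hab : a = b
  swap
  · exact ⟨a, ha, b, hb, hab, Nat.pos_of_ne_zero hfa, hfb⟩
  subst hab
  obtain ⟨z, hz, hza⟩ := hnt.exists_ne a
  rcases Nat.eq_zero_or_pos (T.f z) with hz₀ | hz₀
  · exact ⟨a, ha, z, hz, hza.symm, Nat.pos_of_ne_zero hfa, hz₀ ▸ P.mult_pos (mem_filter.mp hz).1⟩
  · exact ⟨z, hz, a, ha, hza, hz₀, hfb⟩

theorem exists_ne_eq_on_even (T : SYD P p q) {c : ℕ} (hc : 0 < c)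
    (hdvd : ∀ i, Odd i → c ∣ T.f i ∧ c ∣ P.mult i) (hpos : ∑ i ∈ P.oddParts, T.f i ≠ 0)
    (hlt : ∑ i ∈ P.oddParts, T.f i ≠ P.oddCount) (hnt : (P.oddParts : Set ℕ).Nontrivial) :
    ∃ T' : SYD P p q, T' ≠ T ∧ (∀ i, Even i → T'.f i = T.f i) ∧ ∀ i, Odd i → c ∣ T'.f i := by
  obtain ⟨a, ha, b, hb, hab, hfa, hfb⟩ := T.exists_pos_lt_mult hpos hlt hnt
  have hoa : Odd a := (mem_filter.mp ha).2
  have hob : Odd b := (mem_filter.mp hb).2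
  have hca : c ≤ T.f a := Nat.le_of_dvd hfa (hdvd a hoa).1
  have hcb : c ≤ P.mult b - T.f b :=
    Nat.le_of_dvd (Nat.sub_pos_of_lt hfb) (Nat.dvd_sub (hdvd b hob).2 (hdvd b hob).1)
  obtain ⟨T', hT'a, hT'b, hT'i⟩ := T.exists_transfer ha hb hab hca (by omega)
  refine ⟨T', fun h => by rw [h] at hT'a; omega, fun i hi => hT'i i ?_ ?_, fun i hi => ?_⟩
  · rintro rfl; exact Nat.not_even_iff_odd.mpr hoa hi
  · rintro rfl; exact Nat.not_even_iff_odd.mpr hob hi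
  by_cases hia : i = a
  · subst hia; exact (Nat.dvd_add_left (dvd_refl c)).mp (hT'a ▸ (hdvd i hi).1)
  by_cases hib : i = b
  · subst hib; exact hT'b ▸ dvd_add (hdvd i hi).1 (dvd_refl c)
  · exact hT'i i hia hib ▸ (hdvd i hi).1

theorem exists_ne_eq_on_odd (T : SYD P p q) {c : ℕ} (hc : 0 < c)
    (hdvd : ∀ i, Even i → c ∣ T.f i ∧ c ∣ P.mult i) {i₀ : ℕ} (hi₀ : i₀ ∈ P.partsSet)
    (heven : Even i₀) :
    ∃ T' : SYD P p q, T' ≠ T ∧ (∀ i, Odd i → T'.f i = T.f i) ∧ ∀ i, Even i → c ∣ T'.f i := by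
  set v := if T.f i₀ = 0 then c else 0 with hv
  have hvc : c ∣ v := by rw [hv]; split_ifs <;> simp
  have hvm : v ≤ P.mult i₀ := by
    rw [hv]; split_ifs
    · exact Nat.le_of_dvd (P.mult_pos hi₀) (hdvd i₀ heven).2
    · exact Nat.zero_le _
  obtain ⟨T', hT'⟩ := T.exists_update_of_even heven hvm
  refine ⟨T', fun h => ?_, fun i hi => ?_, fun i hi => ?_⟩
  · have := congrFun hT' i₀
    rw [h, Function.update_self, hv] at this
    split_ifs at this <;> omega
  · have hne : i ≠ i₀ := by rintro rfl; exact Nat.not_even_iff_odd.mpr hi heven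
    rw [hT', Function.update_of_ne hne]
  · rw [hT']
    by_cases hne : i = i₀
    · subst hne; rwa [Function.update_self]
    · rw [Function.update_of_ne hne]; exact (hdvd i hi).1

theorem card_isBDI_eq_one_iff {T₀ : SYD P p q} (h₀ : T₀.IsBDI) :
    Nat.card {T : SYD P p q // T.IsBDI} = 1 ↔
      (P.oddCount : ℤ) = |(p : ℤ) - q| ∨ (P.oddParts : Set ℕ).Subsingleton := by
  rw [Nat.card_subtype_eq_one_iff h₀]
  constructor
  · intro huniq
    by_contra! ⟨hne, hnt⟩
    rw [ne_eq, T₀.oddCount_eq_abs_sub_iff, not_or] at hne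
    obtain ⟨T', hT', heven, -⟩ := T₀.exists_ne_eq_on_even one_pos
      (fun _ _ => ⟨one_dvd _, one_dvd _⟩) hne.1 hne.2 hnt
    exact hT' (huniq T' fun i hi => heven i hi ▸ h₀ i hi)
  · intro h T hT
    exact eq_of_eq_on_even (fun i hi => by have := hT i hi; have := h₀ i hi; omega) h

theorem card_isCII_eq_one_iff {T₀ : SYD P p q} (h₀ : T₀.IsCII) :
    Nat.card {T : SYD P p q // T.IsCII} = 1 ↔
      (P.oddCount : ℤ) = |(p : ℤ) - q| ∨ (P.oddParts : Set ℕ).Subsingleton := by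
  obtain ⟨hp, hq, hevenB, hoddB⟩ := h₀
  rw [Nat.card_subtype_eq_one_iff ⟨hp, hq, hevenB, hoddB⟩]
  constructor
  · intro huniq
    by_contra! ⟨hne, hnt⟩
    rw [ne_eq, T₀.oddCount_eq_abs_sub_iff, not_or] at hne
    obtain ⟨T', hT', heven, hodd⟩ := T₀.exists_ne_eq_on_even two_pos
      (fun i hi => ⟨even_iff_two_dvd.mp (hoddB i hi).2, even_iff_two_dvd.mp (hoddB i hi).1⟩)
      hne.1 hne.2 hnt
    exact hT' (huniq T' ⟨hp, hq, fun i hi => heven i hi ▸ hevenB i hi,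
      fun i hi => ⟨(hoddB i hi).1, even_iff_two_dvd.mpr (hodd i hi)⟩⟩)
  · intro h T hT
    exact eq_of_eq_on_even (fun i hi => by have := hT.2.2.1 i hi; have := hevenB i hi; omega) h

theorem card_isCI_eq_one_iff {T₀ : SYD P p q} (h₀ : T₀.IsCI) :
    Nat.card {T : SYD P p q // T.IsCI} = 1 ↔ ∀ i ∈ P.partsSet, Odd i := by
  rw [Nat.card_subtype_eq_one_iff h₀]
  constructor
  · intro huniq i hi
    by_contra heven
    obtain ⟨T', hT', hodd, -⟩ := T₀.exists_ne_eq_on_odd one_pos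
      (fun _ _ => ⟨one_dvd _, one_dvd _⟩) hi (Nat.not_odd_iff_even.mp heven)
    exact hT' (huniq T' ⟨h₀.1, fun i hi => hodd i hi ▸ h₀.2 i hi⟩)
  · intro h T hT
    exact eq_of_eq_on_odd (fun i hi => by have := hT.2 i hi; have := h₀.2 i hi; omega) h

theorem card_isDIII_eq_one_iff {T₀ : SYD P p q} (h₀ : T₀.IsDIII) :
    Nat.card {T : SYD P p q // T.IsDIII} = 1 ↔ ∀ i ∈ P.partsSet, Odd i := by
  obtain ⟨hpq, hoddD, hevenD⟩ := h₀
  rw [Nat.card_subtype_eq_one_iff ⟨hpq, hoddD, hevenD⟩]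
  constructor
  · intro huniq i hi
    by_contra heven
    obtain ⟨T', hT', hodd, heven'⟩ := T₀.exists_ne_eq_on_odd two_pos
      (fun i hi => ⟨even_iff_two_dvd.mp (hevenD i hi).2, even_iff_two_dvd.mp (hevenD i hi).1⟩)
      hi (Nat.not_odd_iff_even.mp heven)
    exact hT' (huniq T' ⟨hpq, fun i hi => hodd i hi ▸ hoddD i hi,
      fun i hi => ⟨(hevenD i hi).1, even_iff_two_dvd.mpr (heven' i hi)⟩⟩)
  · intro h T hT
    exact eq_of_eq_on_odd (fun i hi => by have := hT.2.1 i hi; have := hoddD i hi; omega) h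

end SYD

theorem stmt13_general (P : PartitionData) (p q : ℕ) :
    (Nonempty {T : SYD P p q // T.IsBDI} →
      (Nat.card {T : SYD P p q // T.IsBDI} = 1 ↔
        ((P.oddCount : ℤ) = |(p : ℤ) - (q : ℤ)| ∨
          ∀ j j', 1 ≤ j → j ≤ P.len → 1 ≤ j' → j' ≤ P.len →
            Odd (P.l j) → Odd (P.l j') → P.l j = P.l j'))) ∧
    (Nonempty {T : SYD P p q // T.IsCII} →
      (Nat.card {T : SYD P p q // T.IsCII} = 1 ↔
        ((P.oddCount : ℤ) = |(p : ℤ) - (q : ℤ)| ∨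
          ∀ j j', 1 ≤ j → j ≤ P.len → 1 ≤ j' → j' ≤ P.len →
            Odd (P.l j) → Odd (P.l j') → P.l j = P.l j'))) ∧
    (Nonempty {T : SYD P p q // T.IsCI} →
      (Nat.card {T : SYD P p q // T.IsCI} = 1 ↔
        ∀ j, 1 ≤ j → j ≤ P.len → Odd (P.l j))) ∧
    (Nonempty {T : SYD P p q // T.IsDIII} →
      (Nat.card {T : SYD P p q // T.IsDIII} = 1 ↔
        ∀ j, 1 ≤ j → j ≤ P.len → Odd (P.l j))) := by
  rw [P.forall_odd_l_eq_iff, P.forall_odd_l_iff]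
  exact ⟨fun ⟨⟨_, h⟩⟩ => SYD.card_isBDI_eq_one_iff h, fun ⟨⟨_, h⟩⟩ => SYD.card_isCII_eq_one_iff h,
    fun ⟨⟨_, h⟩⟩ => SYD.card_isCI_eq_one_iff h, fun ⟨⟨_, h⟩⟩ => SYD.card_isDIII_eq_one_iff h⟩

/-- Singleton criteria for `syd_X(λ;p,q)`: for X = BDI, CII it is a singleton
iff the number of odd parts of `λ` equals `|p - q|` or all odd parts of `λ`
have the same length; for X = CI, DIII it is a singleton iff all parts of `λ`
are odd. -/
theorem stmt13 (P : PartitionData) (p q : ℕ) (hn : P.boxSum = p + q) :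
    (Nonempty {T : SYD P p q // T.IsBDI} →
      (Nat.card {T : SYD P p q // T.IsBDI} = 1 ↔
        ((P.oddCount : ℤ) = |(p : ℤ) - (q : ℤ)| ∨
          ∀ j j', 1 ≤ j → j ≤ P.len → 1 ≤ j' → j' ≤ P.len →
            Odd (P.l j) → Odd (P.l j') → P.l j = P.l j'))) ∧
    (Nonempty {T : SYD P p q // T.IsCII} →
      (Nat.card {T : SYD P p q // T.IsCII} = 1 ↔
        ((P.oddCount : ℤ) = |(p : ℤ) - (q : ℤ)| ∨
          ∀ j j', 1 ≤ j → j ≤ P.len → 1 ≤ j' → j' ≤ P.len →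
            Odd (P.l j) → Odd (P.l j') → P.l j = P.l j'))) ∧
    (Nonempty {T : SYD P p q // T.IsCI} →
      (Nat.card {T : SYD P p q // T.IsCI} = 1 ↔
        ∀ j, 1 ≤ j → j ≤ P.len → Odd (P.l j))) ∧
    (Nonempty {T : SYD P p q // T.IsDIII} →
      (Nat.card {T : SYD P p q // T.IsDIII} = 1 ↔
        ∀ j, 1 ≤ j → j ≤ P.len → Odd (P.l j))) :=
  stmt13_general P p q
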